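/- arXiv:0710.3890 — 3 statements merged into one kernel-verified Lean document; each statement's English description precedes it below -/
import Mathlib

section
/- Let m, n be coprime positive integers with m < n. For every j with 2 ≤ j ≤ m, the identity z_1^j = z_0^(j⌈n/m⌉ - ⌈nj/m⌉) · z_j holds in the Laurent polynomial ring, where z_j is as defined. In particular the exponent j⌈n/m⌉ - ⌈nj/m⌉ is a nonnegative integer. -/
/-- The ceiling `⌈jn/m⌉` with the paper's convention `⌈0⌉ = 1`. -/
noncomputable def paperCeil (m n j : ℕ) : ℤ :=
  if j = 0 then 1 else ⌈(j * n : ℚ) / (m : ℚ)⌉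

/-!
All three `z`'s are Laurent monomials, so the identity amounts to comparing exponents:
with `c_j = ⌈jn/m⌉` and `e = j c_1 - c_j` both sides are `x₀^(j(m c_1 - n)) x₂^j x₁^(-j c_1)`.
The only real input is `e ≥ 0`, i.e. subadditivity `⌈j x⌉ ≤ j ⌈x⌉` of the ceiling. Since `x₀`
may vanish, the powers of `x₀` can only be merged because both exponents `m e` and `m c_j - jn`
are nonnegative; the powers of `x₁` merge because both exponents are nonpositive.
-/

theorem Int.ceil_natCast_mul_le {α : Type*} [Ring α] [LinearOrder α] [IsStrictOrderedRing α]
    [FloorRing α] (j : ℕ) (x : α) : ⌈(j : α) * x⌉ ≤ j * ⌈x⌉ :=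
  Int.ceil_le.mpr <| by
    push_cast
    exact mul_le_mul_of_nonneg_left (Int.le_ceil x) j.cast_nonneg

theorem paperCeil_zero (m n : ℕ) : paperCeil m n 0 = 1 := if_pos rfl

theorem paperCeil_of_ne_zero {m n j : ℕ} (hj : j ≠ 0) :
    paperCeil m n j = ⌈(j * n : ℚ) / m⌉ := if_neg hj

theorem paperCeil_nonneg (m n j : ℕ) : 0 ≤ paperCeil m n j := by
  unfold paperCeil
  split_ifs
  · exact zero_le_one
  · exact Int.ceil_nonneg (by positivity)

theorem natCast_mul_le_mul_paperCeil {m : ℕ} (hm : 0 < m) (n j : ℕ) :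
    (j : ℤ) * n ≤ m * paperCeil m n j := by
  rcases eq_or_ne j 0 with rfl | hj
  · simp [paperCeil_zero]
  · have hceil := Int.le_ceil ((j * n : ℚ) / m)
    rw [← paperCeil_of_ne_zero hj, div_le_iff₀ (by exact_mod_cast hm)] at hceil
    exact_mod_cast (by linarith : (j * n : ℚ) ≤ m * paperCeil m n j)

theorem paperCeil_le_mul_paperCeil_one (m n : ℕ) {j : ℕ} (hj : j ≠ 0) :
    paperCeil m n j ≤ j * paperCeil m n 1 := by
  rw [paperCeil_of_ne_zero hj, paperCeil_of_ne_zero one_ne_zero, mul_div_assoc, Nat.cast_one,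
    one_mul]
  exact Int.ceil_natCast_mul_le j _

theorem U1_type_zero_one_relations_general (m n : ℕ)
    (K : Type*) [Field K] (x0 x1 x2 : K)
    (z : ℕ → K)
    (hz : ∀ j, z j =
      x0 ^ ((m : ℤ) * paperCeil m n j - j * n) * x2 ^ (j : ℤ) * x1 ^ (-(paperCeil m n j)))
    (j : ℕ) (hj2 : 2 ≤ j) (hjm : j ≤ m) :
    0 ≤ (j : ℤ) * paperCeil m n 1 - paperCeil m n j ∧
      z 1 ^ j = z 0 ^ ((j : ℤ) * paperCeil m n 1 - paperCeil m n j) * z j := by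
  have hm : 0 < m := by omega
  set c1 := paperCeil m n 1 with hc1
  set cj := paperCeil m n j with hcj
  have he : 0 ≤ (j : ℤ) * c1 - cj :=
    sub_nonneg.mpr (paperCeil_le_mul_paperCeil_one m n (by omega))
  refine ⟨he, ?_⟩
  have hrem : 0 ≤ (m : ℤ) * cj - j * n := sub_nonneg.mpr (natCast_mul_le_mul_paperCeil hm n j)
  have hcj_nonneg : 0 ≤ cj := paperCeil_nonneg m n j
  have hme : 0 ≤ (m : ℤ) * (j * c1 - cj) := mul_nonneg (by positivity) he
  calc z 1 ^ j = x0 ^ (((m : ℤ) * c1 - n) * j) * x2 ^ (j : ℤ) * x1 ^ (-c1 * j) := by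
        rw [hz 1, ← hc1]
        simp only [← zpow_natCast, mul_zpow, ← zpow_mul, Nat.cast_one, one_mul]
    _ = x0 ^ ((m : ℤ) * (j * c1 - cj)) * x0 ^ ((m : ℤ) * cj - j * n) * x2 ^ (j : ℤ) *
          (x1 ^ (-(j * c1 - cj)) * x1 ^ (-cj)) := by
        rw [← zpow_add' (Or.inr (by omega)), ← zpow_add' (Or.inr (by omega))]
        ring_nf
    _ = z 0 ^ ((j : ℤ) * c1 - cj) * z j := by
        rw [hz 0, hz j, paperCeil_zero, ← hcj]
        simp only [Nat.cast_zero, zero_mul, sub_zero, mul_one, zpow_zero, mul_zpow, ← zpow_mul]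
        ring_nf

/-- The monomial identities of type `(0, 1)` on the chart `U₁`:
`z_1^j = z_0^(j⌈n/m⌉ - ⌈nj/m⌉) · z_j` for `2 ≤ j ≤ m`, where
`z_j = x₀^(m⌈jn/m⌉ - jn) x₂^j x₁^(-⌈jn/m⌉)`; in particular the exponent
`j⌈n/m⌉ - ⌈nj/m⌉` is nonnegative. -/
theorem U1_type_zero_one_relations (m n : ℕ) (hm : 0 < m) (hn : 0 < n)
    (hcop : Nat.Coprime m n) (hmn : m < n)
    (K : Type*) [Field K] (x0 x1 x2 : K) (hx1 : x1 ≠ 0)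
    (z : ℕ → K)
    (hz : ∀ j, z j =
      x0 ^ ((m : ℤ) * paperCeil m n j - j * n) * x2 ^ (j : ℤ) * x1 ^ (-(paperCeil m n j)))
    (j : ℕ) (hj2 : 2 ≤ j) (hjm : j ≤ m) :
    0 ≤ (j : ℤ) * paperCeil m n 1 - paperCeil m n j ∧
      z 1 ^ j = z 0 ^ ((j : ℤ) * paperCeil m n 1 - paperCeil m n j) * z j :=
  U1_type_zero_one_relations_general m n K x0 x1 x2 z hz j hj2 hjm
end

section
/- Let a, n, r, m be positive integers with r < m. The affine curve in ℂ² defined by x^(an) - x^(ar) y^(am) + 1 = 0 is smooth: at every point (x,y) on the curve, the gradient of F(x,y) = x^(an) - x^(ar) y^(am) + 1 is nonzero. Moreover the curve contains no points with x = 0. -/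
/-- The affine curve `x^(an) - x^(ar) y^(am) + 1 = 0` in `ℂ²` contains no points with
`x = 0`, and is smooth: at every point of the curve the gradient of
`F(x,y) = x^(an) - x^(ar) y^(am) + 1` is nonzero. -/
theorem chart_curve_smooth (a n r m : ℕ) (ha : 0 < a) (hr : 0 < r) (hrm : r < m)
    (hmn : m < n) (x y : ℂ)
    (hC : x ^ (a * n) - x ^ (a * r) * y ^ (a * m) + 1 = 0) :
    x ≠ 0 ∧
      ((a * n : ℂ) * x ^ (a * n - 1) - (a * r : ℂ) * x ^ (a * r - 1) * y ^ (a * m) ≠ 0 ∨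
        -((a * m : ℂ)) * x ^ (a * r) * y ^ (a * m - 1) ≠ 0) := by
  have han : 0 < a * n := Nat.mul_pos ha (hr.trans (hrm.trans hmn))
  have har : 0 < a * r := Nat.mul_pos ha hr
  have ham : 1 < a * m := by nlinarith
  have hx : x ≠ 0 := by
    intro hx
    rw [hx, zero_pow han.ne', zero_pow har.ne'] at hC
    simp at hC
  refine ⟨hx, ?_⟩
  by_cases hy : y = 0
  · left
    rw [hy, zero_pow (by omega : a * m ≠ 0)]
    simp only [mul_zero, sub_zero]
    exact mul_ne_zero (by exact_mod_cast Nat.cast_ne_zero.mpr han.ne' : (a:ℂ)*n ≠ 0) (pow_ne_zero _ hx)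
  · right
    exact mul_ne_zero (mul_ne_zero (neg_ne_zero.mpr (by exact_mod_cast (Nat.mul_pos ha (hr.trans hrm)).ne')) (pow_ne_zero _ hx)) (pow_ne_zero _ hy)
end

section
/- Let a, m, n be positive integers with gcd(m,n) = 1 and m < n, and let C be the Fermat-type curve of degree amn on the weighted projective plane ℙ(1,m,n), defined by x₀^(amn) + x₁^(an) = x₂^(am). Then C is a smooth projective curve of genus g(C) = ((am-1)(an-2) + a(m-1))/2. -/
open MvPolynomial

/-- The defining polynomial `x₀^(amn) + x₁^(an) - x₂^(am)` of a Fermat-type curve on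
the weighted projective plane `ℙ(1,m,n)`. -/
noncomputable def fermatPoly (a m n : ℕ) : MvPolynomial (Fin 3) ℂ :=
  X 0 ^ (a * m * n) + X 1 ^ (a * n) - X 2 ^ (a * m)

/-- The degree-`d` part of the homogeneous coordinate ring
`ℂ[x₀,x₁,x₂]/(fermatPoly)` for the weighted grading `deg xᵢ = (1, m, n)`. -/
noncomputable def fermatCoordRingPiece (a m n d : ℕ) :
    Submodule ℂ (MvPolynomial (Fin 3) ℂ ⧸ Ideal.span {fermatPoly a m n}) :=
  (weightedHomogeneousSubmodule ℂ ![1, m, n] d).map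
    (Ideal.Quotient.mkₐ ℂ (Ideal.span {fermatPoly a m n})).toLinearMap

/-!
Each partial derivative of `F = x₀^(amn) + x₁^(an) - x₂^(am)` is a nonzero multiple of a power
of a single coordinate, so the gradient vanishes only at the origin.

For the genus, let `S_d` be the weight-`d` polynomials and `A_d` their image in `S/(F)`.
Multiplication by `F`, which is weighted homogeneous of degree `amn`, gives `dim A_d = dim S_d - dim S_(d - amn)`, and
`dim S_d` is the number of `(i, j) ∈ ℕ²` with `m i + n j ≤ d`. Raising `d` by `mn` adds the strip
`i < n`, whose columns contain `⌊(d - m i)/n⌋ + 1` points; since `gcd(m, n) = 1` the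
remainders `(d - m i) mod n` run over `0, …, n - 1`, so the strip contains
`d + 1 - (m - 1)(n - 1)/2` points. Adding up `a` strips gives
`2 dim A_d = 2(a d + 1) - ((am - 1)(an - 2) + a(m - 1))` for `d ≥ amn`, which in particular
shows that `(am - 1)(an - 2) + a(m - 1)` is even.
-/

section WeightedHomogeneousPieces

variable {σ R K : Type*} {w : σ → ℕ}

theorem finrank_weightedHomogeneousSubmodule [Field K] [Finite σ] (hw : ∀ i, w i ≠ 0) (d : ℕ) :
    Module.finrank K (weightedHomogeneousSubmodule K w d) =
      Nat.card {x : σ →₀ ℕ // Finsupp.weight w x = d} := by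
  have := (Finsupp.finite_of_nat_weight_eq w hw d).to_subtype
  rw [weightedHomogeneousSubmodule_eq_finsupp_supported]
  exact Module.finrank_eq_nat_card_basis (basisRestrictSupport K {x | Finsupp.weight w x = d})

theorem weightedHomogeneousComponent_mul_of_isWeightedHomogeneous [CommSemiring R]
    {F : MvPolynomial σ R} {D : ℕ} (hF : IsWeightedHomogeneous w F D) (c : MvPolynomial σ R)
    (e : ℕ) :
    weightedHomogeneousComponent w (e + D) (c * F) = weightedHomogeneousComponent w e c * F := by
  induction c using MvPolynomial.induction_on' with
  | monomial u r =>
    have hu : IsWeightedHomogeneous w (monomial u r) (Finsupp.weight w u) :=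
      isWeightedHomogeneous_monomial _ _ _ rfl
    by_cases he : Finsupp.weight w u = e
    · subst he
      rw [(hu.mul hF).weightedHomogeneousComponent_same, hu.weightedHomogeneousComponent_same]
    · rw [(hu.mul hF).weightedHomogeneousComponent_ne _ (by omega),
        hu.weightedHomogeneousComponent_ne _ (Ne.symm he), zero_mul]
  | add p q hp hq => rw [add_mul, map_add, map_add, hp, hq, add_mul]

theorem exists_isWeightedHomogeneous_eq_mul_of_mem_span_singleton [CommSemiring R]
    {F p : MvPolynomial σ R} {D d : ℕ} (hF : IsWeightedHomogeneous w F D)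
    (hp : IsWeightedHomogeneous w p d) (hD : D ≤ d) (hpF : p ∈ Ideal.span {F}) :
    ∃ q, IsWeightedHomogeneous w q (d - D) ∧ p = q * F := by
  obtain ⟨c, rfl⟩ := Ideal.mem_span_singleton'.1 hpF
  refine ⟨_, weightedHomogeneousComponent_isWeightedHomogeneous (d - D) c, ?_⟩
  rw [← weightedHomogeneousComponent_mul_of_isWeightedHomogeneous hF, Nat.sub_add_cancel hD,
    hp.weightedHomogeneousComponent_same]

theorem finrank_map_mk_span_singleton_add_finrank [Field K] {F : MvPolynomial σ K} {D d : ℕ}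
    (hF : IsWeightedHomogeneous w F D) (hF0 : F ≠ 0) (hD : D ≤ d)
    [FiniteDimensional K (weightedHomogeneousSubmodule K w d)] :
    Module.finrank K ((weightedHomogeneousSubmodule K w d).map
        (Ideal.Quotient.mkₐ K (Ideal.span {F})).toLinearMap) +
      Module.finrank K (weightedHomogeneousSubmodule K w (d - D)) =
      Module.finrank K (weightedHomogeneousSubmodule K w d) := by
  set φ := (Ideal.Quotient.mkₐ K (Ideal.span {F})).toLinearMap.domRestrict
    (weightedHomogeneousSubmodule K w d)
  have hmul : ∀ q ∈ weightedHomogeneousSubmodule K w (d - D),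
      LinearMap.mulRight K F q ∈ weightedHomogeneousSubmodule K w d := fun q hq => by
    simpa [Nat.sub_add_cancel hD] using (show IsWeightedHomogeneous w q (d - D) from hq).mul hF
  set μ := (LinearMap.mulRight K F).restrict hmul
  have hμ : Function.Injective μ := fun q q' h =>
    Subtype.ext (mul_left_injective₀ hF0 (congrArg Subtype.val h))
  have hker : LinearMap.ker φ = LinearMap.range μ := by
    ext ⟨p, hp⟩
    simp only [φ, LinearMap.mem_ker, LinearMap.domRestrict_apply, AlgHom.toLinearMap_apply,
      Ideal.Quotient.mkₐ_eq_mk, Ideal.Quotient.eq_zero_iff_mem]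
    constructor
    · intro hpF
      obtain ⟨q, hq, rfl⟩ := exists_isWeightedHomogeneous_eq_mul_of_mem_span_singleton hF hp hD hpF
      exact ⟨⟨q, hq⟩, rfl⟩
    · rintro ⟨q, hq⟩
      rw [← show (q : MvPolynomial σ K) * F = p from congrArg Subtype.val hq]
      exact Ideal.mul_mem_left _ _ (Ideal.subset_span rfl)
  rw [← LinearMap.range_domRestrict, ← LinearMap.finrank_range_of_inj hμ, ← hker]
  exact φ.finrank_range_add_finrank_ker

end WeightedHomogeneousPieces

section LatticeCount

open Finset

variable {m n : ℕ}

theorem sum_range_sub_mul_mod_eq (hcop : m.Coprime n) {D : ℕ} (hD : m * (n - 1) ≤ D) :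
    ∑ i ∈ range n, (D - m * i) % n = ∑ i ∈ range n, i := by
  have hmaps : Set.MapsTo (fun i => (D - m * i) % n) (range n) (range n) := fun i hi => by
    simp only [coe_range, Set.mem_Iio] at hi ⊢; exact Nat.mod_lt _ (by omega)
  have hinj : Set.InjOn (fun i => (D - m * i) % n) (range n) := fun i hi j hj hij => by
    simp only [coe_range, Set.mem_Iio] at hi hj
    have hmi : m * i ≤ D := (Nat.mul_le_mul_left m (by omega)).trans hD
    have hmj : m * j ≤ D := (Nat.mul_le_mul_left m (by omega)).trans hD
    have h : ((D - m * i : ℕ) : ZMod n) = (D - m * j : ℕ) := (ZMod.natCast_eq_natCast_iff' ..).2 hij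
    push_cast [Nat.cast_sub hmi, Nat.cast_sub hmj] at h
    have h' : (ZMod.unitOfCoprime m hcop : ZMod n) * i = ZMod.unitOfCoprime m hcop * j := by
      rw [ZMod.coe_unitOfCoprime]; linear_combination -h
    have := (ZMod.natCast_eq_natCast_iff' i j n).1 ((Units.mul_right_inj _).1 h')
    rwa [Nat.mod_eq_of_lt hi, Nat.mod_eq_of_lt hj] at this
  exact sum_nbij _ hmaps hinj (surjOn_of_injOn_of_card_le _ hmaps hinj le_rfl) fun _ _ => rfl

theorem two_mul_sum_range_sub_mul_div_add_one (hn : 0 < n) (hcop : m.Coprime n) {D : ℕ}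
    (hD : m * (n - 1) ≤ D) :
    2 * (∑ i ∈ range n, ((D - m * i) / n + 1) : ℕ) =
      2 * (D : ℤ) + 2 - ((m : ℤ) - 1) * ((n : ℤ) - 1) := by
  have hdecomp : n * ∑ i ∈ range n, (D - m * i) / n + ∑ i ∈ range n, i +
      m * ∑ i ∈ range n, i = n * D := by
    have h : ∀ i ∈ range n, n * ((D - m * i) / n) + (D - m * i) % n + m * i = D := by
      intro i hi
      have := (Nat.mul_le_mul_left m (by simp at hi; omega : i ≤ n - 1)).trans hD
      have := Nat.div_add_mod (D - m * i) n
      omega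
    have := sum_congr rfl h
    rwa [sum_add_distrib, sum_add_distrib, ← mul_sum, ← mul_sum, sum_range_sub_mul_mod_eq hcop hD,
      sum_const, card_range, smul_eq_mul] at this
  have hJ := sum_range_id_mul_two n
  rw [sum_add_distrib, sum_const, card_range, smul_eq_mul, mul_one]
  set Q := ∑ i ∈ range n, (D - m * i) / n
  set J := ∑ i ∈ range n, i
  zify [hn] at hdecomp hJ
  have hQ : (n : ℤ) * (2 * Q) = n * (2 * D - (m + 1) * (n - 1)) := by
    linear_combination 2 * hdecomp - (m + 1) * hJ
  have := mul_left_cancel₀ (by exact_mod_cast hn.ne' : (n : ℤ) ≠ 0) hQ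
  push_cast
  linear_combination this

/-- The number of `(i, j) ∈ ℕ²` with `m i + n j ≤ d`, counted column by column. -/
def latticeCount (m n d : ℕ) : ℕ :=
  ∑ i ∈ range (d / m + 1), ((d - m * i) / n + 1)

theorem latticeCount_add_mul (hm : 0 < m) (d : ℕ) :
    latticeCount m n (d + m * n) =
      latticeCount m n d + ∑ i ∈ range n, ((d + m * n - m * i) / n + 1) := by
  have hcol : ∀ i, d + m * n - m * (n + i) = d - m * i := fun i => by
    rw [mul_add, ← Nat.sub_sub, Nat.add_sub_cancel]
  rw [latticeCount, latticeCount, Nat.add_mul_div_left _ _ hm,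
    show d / m + n + 1 = n + (d / m + 1) by ring, sum_range_add]
  simp only [hcol]
  ring

theorem two_mul_latticeCount_add_mul_mul (hm : 0 < m) (hn : 0 < n) (hcop : m.Coprime n)
    (d k : ℕ) :
    2 * (latticeCount m n (d + k * (m * n)) : ℤ) = 2 * (latticeCount m n d : ℤ) +
      k * (2 * (d : ℤ) + 2 - ((m : ℤ) - 1) * ((n : ℤ) - 1)) + m * n * k * (k + 1) := by
  induction k with
  | zero => simp
  | succ k ih =>
    have hD : m * (n - 1) ≤ d + k * (m * n) + m * n :=
      (Nat.mul_le_mul_left m (Nat.sub_le n 1)).trans (Nat.le_add_left _ _)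
    rw [show d + (k + 1) * (m * n) = d + k * (m * n) + m * n by ring, latticeCount_add_mul hm,
      Nat.cast_add, mul_add, ih, two_mul_sum_range_sub_mul_div_add_one hn hcop hD]
    push_cast
    ring

theorem weight_one_m_n_apply (m n : ℕ) (x : Fin 3 →₀ ℕ) :
    Finsupp.weight ![1, m, n] x = x 0 + m * x 1 + n * x 2 := by
  simp [Finsupp.weight_apply, Finsupp.sum_fintype, Fin.sum_univ_three, mul_comm]

theorem card_weight_eq_latticeCount (hm : 0 < m) (hn : 0 < n) (d : ℕ) :
    Nat.card {x : Fin 3 →₀ ℕ // Finsupp.weight ![1, m, n] x = d} = latticeCount m n d := by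
  have hmem : ∀ i j, (⟨i, j⟩ : Σ _ : ℕ, ℕ) ∈
      (range (d / m + 1)).sigma (fun i => range ((d - m * i) / n + 1)) ↔ m * i + n * j ≤ d := by
    intro i j
    simp only [mem_sigma, mem_range, Nat.lt_succ_iff, Nat.le_div_iff_mul_le hm,
      Nat.le_div_iff_mul_le hn]
    rw [mul_comm i, mul_comm j]
    omega
  let e : {x : Fin 3 →₀ ℕ // Finsupp.weight ![1, m, n] x = d} ≃
      {s // s ∈ (range (d / m + 1)).sigma (fun i => range ((d - m * i) / n + 1))} :=
    { toFun x := ⟨⟨x.1 1, x.1 2⟩, (hmem _ _).2 <| by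
        have := weight_one_m_n_apply m n x.1
        have := x.2
        omega⟩
      invFun
        | ⟨⟨i, j⟩, hs⟩ => ⟨Finsupp.equivFunOnFinite.symm ![d - m * i - n * j, i, j], by
          have := (hmem i j).1 hs
          simp [weight_one_m_n_apply]
          omega⟩
      left_inv x := by
        have := x.2
        rw [weight_one_m_n_apply] at this
        ext i
        fin_cases i <;> simp; omega
      right_inv | ⟨⟨i, j⟩, hs⟩ => rfl }
  rw [Nat.card_congr e, Nat.card_eq_finsetCard, card_sigma]
  simp [latticeCount]

end LatticeCount

theorem eq_zero_of_natCast_mul_pow_sub_one_eq_zero {R : Type*} [Semiring R] [NoZeroDivisors R]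
    [CharZero R] {e : ℕ} (he : 0 < e) {x : R} (h : (e : R) * x ^ (e - 1) = 0) : x = 0 := by
  rcases Nat.lt_or_ge 1 e with he' | he'
  · refine pow_eq_zero_iff (by omega) |>.1 ((mul_eq_zero.1 h).resolve_left ?_)
    exact Nat.cast_ne_zero.2 (by omega)
  · simp [show e = 1 by omega] at h

theorem eval_pderiv_fermatPoly (a m n : ℕ) (p : Fin 3 → ℂ) :
    eval p (pderiv 0 (fermatPoly a m n)) = (a * m * n : ℕ) * p 0 ^ (a * m * n - 1) ∧
    eval p (pderiv 1 (fermatPoly a m n)) = (a * n : ℕ) * p 1 ^ (a * n - 1) ∧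
    eval p (pderiv 2 (fermatPoly a m n)) = -((a * m : ℕ) * p 2 ^ (a * m - 1)) := by
  simp [fermatPoly, pderiv_X]

theorem eq_zero_of_eval_pderiv_fermatPoly_eq_zero {a m n : ℕ} (ha : 0 < a) (hm : 0 < m)
    (hn : 0 < n) {p : Fin 3 → ℂ} (h : ∀ i, eval p (pderiv i (fermatPoly a m n)) = 0) : p = 0 := by
  obtain ⟨h0, h1, h2⟩ := eval_pderiv_fermatPoly a m n p
  funext i
  fin_cases i
  · exact eq_zero_of_natCast_mul_pow_sub_one_eq_zero (by positivity) (h0 ▸ h 0)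
  · exact eq_zero_of_natCast_mul_pow_sub_one_eq_zero (by positivity) (h1 ▸ h 1)
  · exact eq_zero_of_natCast_mul_pow_sub_one_eq_zero (by positivity) (neg_eq_zero.1 (h2 ▸ h 2))

theorem isWeightedHomogeneous_fermatPoly (a m n : ℕ) :
    IsWeightedHomogeneous ![1, m, n] (fermatPoly a m n) (a * m * n) := by
  have h0 :
      IsWeightedHomogeneous ![1, m, n] (X 0 ^ (a * m * n) : MvPolynomial _ ℂ) (a * m * n) := by
    simpa using (isWeightedHomogeneous_X ℂ ![1, m, n] 0).pow (a * m * n)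
  have h1 : IsWeightedHomogeneous ![1, m, n] (X 1 ^ (a * n) : MvPolynomial _ ℂ) (a * m * n) := by
    simpa [mul_right_comm a] using (isWeightedHomogeneous_X ℂ ![1, m, n] 1).pow (a * n)
  have h2 : IsWeightedHomogeneous ![1, m, n] (X 2 ^ (a * m) : MvPolynomial _ ℂ) (a * m * n) := by
    simpa [mul_assoc] using (isWeightedHomogeneous_X ℂ ![1, m, n] 2).pow (a * m)
  exact (h0.add h1).sub h2

theorem fermatPoly_ne_zero (a m n : ℕ) : fermatPoly a m n ≠ 0 := fun h => by
  simpa [fermatPoly] using congrArg (eval 1) h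

theorem fermat_genus_formula_nonneg {a m n : ℕ} (ha : 0 < a) (hm : 0 < m) (hn : 0 < n) :
    0 ≤ ((a * m : ℤ) - 1) * ((a * n : ℤ) - 2) + (a : ℤ) * ((m : ℤ) - 1) := by
  have hm' : (1 : ℤ) ≤ m := by exact_mod_cast hm
  have ham : (a : ℤ) ≤ a * m := le_mul_of_one_le_right (by positivity) hm'
  have han : (a : ℤ) ≤ a * n := le_mul_of_one_le_right (by positivity) (by exact_mod_cast hn)
  rcases (Nat.one_le_iff_ne_zero.2 ha.ne').eq_or_lt with rfl | ha'
  · push_cast at *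
    nlinarith
  · have ha' : (2 : ℤ) ≤ a := by exact_mod_cast ha'
    nlinarith

theorem two_mul_finrank_fermatCoordRingPiece {a m n d : ℕ} (hm : 0 < m) (hn : 0 < n)
    (hcop : m.Coprime n) (hd : a * m * n ≤ d) :
    2 * (Module.finrank ℂ (fermatCoordRingPiece a m n d) : ℤ) =
      2 * (a * d + 1) - (((a * m : ℤ) - 1) * ((a * n : ℤ) - 2) + (a : ℤ) * ((m : ℤ) - 1)) := by
  have hw : ∀ i, ![1, m, n] i ≠ 0 := by
    intro i
    fin_cases i <;> simp [hm.ne', hn.ne']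
  have := Module.Finite.iff_fg.2 (weightedHomogeneousSubmodule_fg ℂ _ hw d)
  have hsplit := finrank_map_mk_span_singleton_add_finrank
    (isWeightedHomogeneous_fermatPoly a m n) (fermatPoly_ne_zero a m n) hd
  rw [finrank_weightedHomogeneousSubmodule hw, finrank_weightedHomogeneousSubmodule hw,
    card_weight_eq_latticeCount hm hn, card_weight_eq_latticeCount hm hn] at hsplit
  obtain ⟨d, rfl⟩ := Nat.exists_eq_add_of_le' hd
  have hcount := two_mul_latticeCount_add_mul_mul hm hn hcop d a
  rw [Nat.add_sub_cancel, show a * m * n = a * (m * n) by ring] at hsplit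
  rw [fermatCoordRingPiece, show a * m * n = a * (m * n) by ring]
  zify at hsplit
  push_cast
  linear_combination 2 * hsplit + hcount

/-- Smoothness of `C` is expressed by: the affine cone over `C` is smooth away from the origin,
and `C` avoids the two singular points `[0,0,1]`, `[0,1,0]` of `ℙ(1,m,n)`. The genus `g` is
expressed through the Hilbert function of the homogeneous coordinate ring:
`dim_ℂ A_d = a·d + 1 - g` for all large `d` (Riemann–Roch, with `deg O_C(1) = a`). -/
theorem fermat_type_curve_smooth_and_genus_general (a m n : ℕ) (ha : 0 < a) (hm : 0 < m)
    (hn : 0 < n) (hcop : Nat.Coprime m n) :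
    (∀ p : Fin 3 → ℂ, p ≠ 0 → eval p (fermatPoly a m n) = 0 →
      ∃ i : Fin 3, eval p (pderiv i (fermatPoly a m n)) ≠ 0) ∧
    (∀ x2 : ℂ, eval ![0, 0, x2] (fermatPoly a m n) = 0 → x2 = 0) ∧
    (∀ x1 : ℂ, eval ![0, x1, 0] (fermatPoly a m n) = 0 → x1 = 0) ∧
    ∃ g : ℕ, 2 * (g : ℤ) = ((a * m : ℤ) - 1) * ((a * n : ℤ) - 2) + (a : ℤ) * ((m : ℤ) - 1) ∧
      ∃ N : ℕ, ∀ d : ℕ, N ≤ d →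
        (Module.finrank ℂ (fermatCoordRingPiece a m n d) : ℤ) = a * d + 1 - g := by
  refine ⟨fun p hp _ => ?_, fun x2 h => ?_, fun x1 h => ?_, ?_⟩
  · by_contra! h
    exact hp (eq_zero_of_eval_pderiv_fermatPoly_eq_zero ha hm hn h)
  · simpa [fermatPoly, ha.ne', hm.ne', hn.ne'] using h
  · simpa [fermatPoly, ha.ne', hm.ne', hn.ne'] using h
  have hgenus := two_mul_finrank_fermatCoordRingPiece hm hn hcop (le_refl (a * m * n))
  push_cast at hgenus
  obtain ⟨g, hg⟩ := Int.eq_ofNat_of_zero_le (a := a * (a * m * n) + 1 -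
    Module.finrank ℂ (fermatCoordRingPiece a m n (a * m * n)))
    (by linarith [fermat_genus_formula_nonneg ha hm hn])
  refine ⟨g, by linarith, a * m * n, fun d hd => ?_⟩
  linarith [two_mul_finrank_fermatCoordRingPiece hm hn hcop hd]

/-- The Fermat-type curve `C : x₀^(amn) + x₁^(an) = x₂^(am)` of degree `amn` on
`ℙ(1,m,n)` (with `gcd(m,n) = 1`, `m < n`) is a smooth projective curve of genus
`((am-1)(an-2) + a(m-1))/2`.  Smoothness is expressed by: the affine cone over `C` is
smooth away from the origin, and `C` avoids the two singular points `[0,0,1]`, `[0,1,0]`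
of `ℙ(1,m,n)`.  The genus `g` is expressed through the Hilbert function of the
homogeneous coordinate ring: `dim_ℂ A_d = a·d + 1 - g` for all large `d`
(Riemann–Roch: `χ(O_C(d)) = deg(O_C(d)) + 1 - g` with `deg O_C(1) = a`). -/
theorem fermat_type_curve_smooth_and_genus (a m n : ℕ) (ha : 0 < a) (hm : 0 < m)
    (hn : 0 < n) (hcop : Nat.Coprime m n) (hmn : m < n) :
    (∀ p : Fin 3 → ℂ, p ≠ 0 → eval p (fermatPoly a m n) = 0 →
      ∃ i : Fin 3, eval p (pderiv i (fermatPoly a m n)) ≠ 0) ∧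
    (∀ x2 : ℂ, eval ![0, 0, x2] (fermatPoly a m n) = 0 → x2 = 0) ∧
    (∀ x1 : ℂ, eval ![0, x1, 0] (fermatPoly a m n) = 0 → x1 = 0) ∧
    ∃ g : ℕ, 2 * (g : ℤ) = ((a * m : ℤ) - 1) * ((a * n : ℤ) - 2) + (a : ℤ) * ((m : ℤ) - 1) ∧
      ∃ N : ℕ, ∀ d : ℕ, N ≤ d →
        (Module.finrank ℂ (fermatCoordRingPiece a m n d) : ℤ) = a * d + 1 - g :=
  fermat_type_curve_smooth_and_genus_general a m n ha hm hn hcop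
end
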